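/- arXiv:1701.09050 — 2 statements merged into one kernel-verified Lean document; each statement's English description precedes it below -/
import Mathlib

section
/- Let A and B be Hermitian operators on a finite-dimensional Hilbert space and F a positive trace-preserving linear map. Then Tr(F(A)₊) ≤ Tr(A₊), where X₊ denotes the positive part of the Hermitian operator X. -/
open Matrix
open scoped ComplexOrder

open Classical in
/-- The positive part `A₊` of a Hermitian matrix `A`, defined via the spectral
decomposition (and `0` if `A` is not Hermitian). -/
noncomputable def posPartOf {n : Type*} [Fintype n] [DecidableEq n] (A : Matrix n n ℂ) :
    Matrix n n ℂ :=
  if hA : A.IsHermitian then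
    (hA.eigenvectorUnitary : Matrix n n ℂ) *
      Matrix.diagonal (fun i => ((max (hA.eigenvalues i) 0 : ℝ) : ℂ)) *
      (star (hA.eigenvectorUnitary : Matrix n n ℂ))
  else 0

open Classical in
/-- The negative part `A₋` of a Hermitian matrix `A` (so that `A = A₊ - A₋`). -/
noncomputable def negPartOf {n : Type*} [Fintype n] [DecidableEq n] (A : Matrix n n ℂ) :
    Matrix n n ℂ :=
  if hA : A.IsHermitian then
    (hA.eigenvectorUnitary : Matrix n n ℂ) *
      Matrix.diagonal (fun i => ((max (-(hA.eigenvalues i)) 0 : ℝ) : ℂ)) *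
      (star (hA.eigenvectorUnitary : Matrix n n ℂ))
  else 0

open Classical in
/-- The spectral projection `{A > 0}` onto the strictly positive eigenspaces of a
Hermitian matrix `A` (and `0` if `A` is not Hermitian). -/
noncomputable def posProjOf {n : Type*} [Fintype n] [DecidableEq n] (A : Matrix n n ℂ) :
    Matrix n n ℂ :=
  if hA : A.IsHermitian then
    (hA.eigenvectorUnitary : Matrix n n ℂ) *
      Matrix.diagonal (fun i => if 0 < hA.eigenvalues i then (1 : ℂ) else 0) *
      (star (hA.eigenvectorUnitary : Matrix n n ℂ))
  else 0

open Classical in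
/-- The trace norm of a Hermitian matrix: the sum of absolute values of eigenvalues. -/
noncomputable def traceNormOf {n : Type*} [Fintype n] [DecidableEq n] (A : Matrix n n ℂ) : ℝ :=
  if hA : A.IsHermitian then ∑ i, |hA.eigenvalues i| else 0

/-!
If `P` is the spectral projection of a Hermitian `X` onto its positive eigenspaces, then
`X₊ = X P` and `0 ≤ P ≤ 1`. Hence `X ≤ Y` with `0 ≤ Y` gives
`Tr X₊ = Tr (X P) ≤ Tr (Y P) ≤ Tr Y`, the two steps being `Tr (Z T) ≥ 0` for `Z, T ≥ 0`
applied to `Y - X, P` and to `Y, 1 - P`. For a positive map `F`, `F(A₊) - F(A) = F(A₋) ≥ 0`,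
so this applies to `X = F(A)`, `Y = F(A₊)`, and `Tr F(A₊) = Tr A₊` by trace preservation.
-/

open scoped MatrixOrder

namespace Matrix

variable {𝕜 n : Type*} [RCLike 𝕜]

lemma IsHermitian.of_le {X Y : Matrix n n 𝕜} (hY : Y.IsHermitian) (hXY : X ≤ Y) :
    X.IsHermitian := by
  simpa using hY.sub (le_iff.mp hXY).isHermitian

variable [Fintype n] [DecidableEq n]

lemma trace_mul_nonneg {Y T : Matrix n n 𝕜} (hY : 0 ≤ Y) (hT : 0 ≤ T) :
    0 ≤ (Y * T).trace := by
  have hsqrt : IsSelfAdjoint (CFC.sqrt T) := (CFC.sqrt_nonneg T).isSelfAdjoint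
  have hconj := star_left_conjugate_nonneg hY (CFC.sqrt T)
  rw [hsqrt.star_eq] at hconj
  calc (0 : 𝕜) ≤ (CFC.sqrt T * Y * CFC.sqrt T).trace := hconj.posSemidef.trace_nonneg
    _ = (Y * T).trace := by
      rw [trace_mul_cycle, CFC.sqrt_mul_sqrt_self T hT, trace_mul_comm]

lemma trace_mul_le_trace_mul_of_le {X Y T : Matrix n n 𝕜} (hXY : X ≤ Y) (hT : 0 ≤ T) :
    (X * T).trace ≤ (Y * T).trace := by
  have := trace_mul_nonneg (sub_nonneg.mpr hXY) hT
  rwa [sub_mul, trace_sub, sub_nonneg] at this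

lemma trace_mul_le_trace {Y T : Matrix n n 𝕜} (hY : 0 ≤ Y) (hT : T ≤ 1) :
    (Y * T).trace ≤ Y.trace := by
  have := trace_mul_nonneg hY (sub_nonneg.mpr hT)
  rwa [mul_sub, mul_one, trace_sub, sub_nonneg] at this

lemma IsHermitian.posPart_eq_mul_cfc {X : Matrix n n 𝕜} (hX : X.IsHermitian) :
    X⁺ = X * cfc (fun x : ℝ => if 0 < x then 1 else 0) X := by
  conv_rhs => enter [1]; rw [← cfc_id' ℝ X]
  rw [← cfc_mul (fun x : ℝ => x) _ X (hg := X.finite_real_spectrum.continuousOn _),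
    CFC.posPart_def, cfcₙ_eq_cfc]
  refine cfc_congr fun x _ => ?_
  split_ifs with hx
  · simp [hx.le]
  · simp [not_lt.mp hx]

lemma trace_posPart_le_of_le {X Y : Matrix n n 𝕜} (hY : 0 ≤ Y) (hXY : X ≤ Y) :
    X⁺.trace ≤ Y.trace := by
  have hX : X.IsHermitian := hY.posSemidef.isHermitian.of_le hXY
  set P := cfc (fun x : ℝ => if 0 < x then 1 else 0) X
  have hP : 0 ≤ P := cfc_nonneg fun x _ => by split_ifs <;> norm_num
  have hP1 : P ≤ 1 := cfc_le_one _ _ fun x _ => by split_ifs <;> norm_num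
  calc X⁺.trace = (X * P).trace := by rw [hX.posPart_eq_mul_cfc]
    _ ≤ (Y * P).trace := trace_mul_le_trace_mul_of_le hXY hP
    _ ≤ Y.trace := trace_mul_le_trace hY hP1

lemma IsHermitian.posPartOf_eq_posPart {A : Matrix n n ℂ} (hA : A.IsHermitian) :
    posPartOf A = A⁺ := by
  rw [posPartOf, dif_pos hA, CFC.posPart_def, cfcₙ_eq_cfc, hA.cfc_eq, IsHermitian.cfc,
    Unitary.conjStarAlgAut_apply]
  rfl

end Matrix

theorem trace_posPart_le_of_PTP_general {n m : Type*} [Fintype n] [DecidableEq n]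
    [Fintype m] [DecidableEq m]
    (F : Matrix n n ℂ →ₗ[ℂ] Matrix m m ℂ)
    (hFpos : ∀ X : Matrix n n ℂ, X.PosSemidef → (F X).PosSemidef)
    (hFtr : ∀ X : Matrix n n ℂ, (F X).trace = X.trace)
    (A : Matrix n n ℂ) (hA : A.IsHermitian) :
    ((posPartOf (F A)).trace).re ≤ ((posPartOf A).trace).re := by
  have hF_nonneg {X : Matrix n n ℂ} (hX : 0 ≤ X) : 0 ≤ F X := (hFpos X hX.posSemidef).nonneg
  have hFApos : 0 ≤ F A⁺ := hF_nonneg (CFC.posPart_nonneg A)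
  have hFA_le : F A ≤ F A⁺ := by
    have hsub : A⁺ - A = A⁻ :=
      sub_eq_of_eq_add' (sub_eq_iff_eq_add.mp (CFC.posPart_sub_negPart A))
    rw [← sub_nonneg, ← map_sub, hsub]
    exact hF_nonneg (CFC.negPart_nonneg A)
  have hFA : (F A).IsHermitian := hFApos.posSemidef.isHermitian.of_le hFA_le
  rw [hA.posPartOf_eq_posPart, hFA.posPartOf_eq_posPart, ← hFtr]
  exact (Complex.le_def.mp (trace_posPart_le_of_le hFApos hFA_le)).1

/-- For Hermitian matrices `A`, `B` and a positive trace-preserving linear map `F`,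
`Tr (F(A))₊ ≤ Tr A₊`. -/
theorem trace_posPart_le_of_PTP {n m : Type*} [Fintype n] [DecidableEq n]
    [Fintype m] [DecidableEq m]
    (F : Matrix n n ℂ →ₗ[ℂ] Matrix m m ℂ)
    (hFpos : ∀ X : Matrix n n ℂ, X.PosSemidef → (F X).PosSemidef)
    (hFtr : ∀ X : Matrix n n ℂ, (F X).trace = X.trace)
    (A B : Matrix n n ℂ) (hA : A.IsHermitian) (hB : B.IsHermitian) :
    ((posPartOf (F A)).trace).re ≤ ((posPartOf A).trace).re :=
  trace_posPart_le_of_PTP_general F hFpos hFtr A hA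
end

section
/- Let ρ̂ = {ρ_n} and ρ̂' = {ρ'_n} be sequences of density operators with lim_n ‖ρ_n − ρ'_n‖₁ = 0, and σ̂ = {σ_n} a sequence of positive semidefinite Hermitian operators. Then for every ε ∈ [0,1], D̲(ε|ρ̂‖σ̂) = D̲(ε|ρ̂'‖σ̂) and D̄(ε|ρ̂‖σ̂) = D̄(ε|ρ̂'‖σ̂). -/
open Matrix
open scoped ComplexOrder

section MatrixAux

variable {m : Type*} [Fintype m] [DecidableEq m]

lemma conj_mul_conj (U : Matrix.unitaryGroup m ℂ) (d e : m → ℂ) :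
    ((U : Matrix m m ℂ) * Matrix.diagonal d * star (U : Matrix m m ℂ)) *
      ((U : Matrix m m ℂ) * Matrix.diagonal e * star (U : Matrix m m ℂ)) =
    (U : Matrix m m ℂ) * Matrix.diagonal (fun i => d i * e i) * star (U : Matrix m m ℂ) := by
  have h : (star (U : Matrix m m ℂ)) * (U : Matrix m m ℂ) = 1 :=
    Matrix.mem_unitaryGroup_iff'.mp U.2
  calc ((U : Matrix m m ℂ) * Matrix.diagonal d * star (U : Matrix m m ℂ)) *
      ((U : Matrix m m ℂ) * Matrix.diagonal e * star (U : Matrix m m ℂ))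
      = (U : Matrix m m ℂ) * Matrix.diagonal d *
          ((star (U : Matrix m m ℂ)) * (U : Matrix m m ℂ)) *
          Matrix.diagonal e * star (U : Matrix m m ℂ) := by
        simp only [Matrix.mul_assoc]
    _ = (U : Matrix m m ℂ) * (Matrix.diagonal d * Matrix.diagonal e) * star (U : Matrix m m ℂ) := by
        rw [h, Matrix.mul_one]
        simp only [Matrix.mul_assoc]
    _ = _ := by rw [Matrix.diagonal_mul_diagonal]

lemma uconj_trace (U : Matrix.unitaryGroup m ℂ) (d : m → ℂ) :
    ((U : Matrix m m ℂ) * Matrix.diagonal d * star (U : Matrix m m ℂ)).trace = ∑ i, d i := by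
  rw [Matrix.trace_mul_cycle, Matrix.mem_unitaryGroup_iff'.mp U.2, one_mul,
    Matrix.trace_diagonal]

lemma conj_sub_conj (U : Matrix.unitaryGroup m ℂ) (d e : m → ℂ) :
    ((U : Matrix m m ℂ) * Matrix.diagonal d * star (U : Matrix m m ℂ)) -
      ((U : Matrix m m ℂ) * Matrix.diagonal e * star (U : Matrix m m ℂ)) =
    (U : Matrix m m ℂ) * Matrix.diagonal (fun i => d i - e i) * star (U : Matrix m m ℂ) := by
  rw [← Matrix.sub_mul, ← Matrix.mul_sub, Matrix.diagonal_sub]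

lemma conj_posSemidef (U : Matrix.unitaryGroup m ℂ) {d : m → ℂ} (hd : ∀ i, 0 ≤ d i) :
    ((U : Matrix m m ℂ) * Matrix.diagonal d * star (U : Matrix m m ℂ)).PosSemidef := by
  rw [Matrix.star_eq_conjTranspose]
  exact (Matrix.posSemidef_diagonal_iff.mpr hd).mul_mul_conjTranspose_same _

lemma posPartOf_posSemidef (A : Matrix m m ℂ) : (posPartOf A).PosSemidef := by
  unfold posPartOf
  split_ifs with hA
  · exact conj_posSemidef _ fun i => by
      rw [Complex.zero_le_real]; exact le_max_right _ _
  · exact Matrix.PosSemidef.zero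

lemma negPartOf_posSemidef (A : Matrix m m ℂ) : (negPartOf A).PosSemidef := by
  unfold negPartOf
  split_ifs with hA
  · exact conj_posSemidef _ fun i => by
      rw [Complex.zero_le_real]; exact le_max_right _ _
  · exact Matrix.PosSemidef.zero

lemma posProjOf_posSemidef (A : Matrix m m ℂ) : (posProjOf A).PosSemidef := by
  unfold posProjOf
  split_ifs with hA
  · exact conj_posSemidef _ fun i => by split_ifs <;> simp
  · exact Matrix.PosSemidef.zero

lemma one_sub_posProjOf_posSemidef (A : Matrix m m ℂ) :
    ((1 : Matrix m m ℂ) - posProjOf A).PosSemidef := by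
  unfold posProjOf
  split_ifs with hA
  · have h1 : (1 : Matrix m m ℂ) =
        (hA.eigenvectorUnitary : Matrix m m ℂ) * Matrix.diagonal (fun _ => (1:ℂ)) *
          star (hA.eigenvectorUnitary : Matrix m m ℂ) := by
      rw [Matrix.diagonal_one, Matrix.mul_one, Matrix.mem_unitaryGroup_iff.mp
        hA.eigenvectorUnitary.2]
    rw [h1, conj_sub_conj]
    exact conj_posSemidef _ fun i => by split_ifs <;> simp
  · simpa using Matrix.PosSemidef.one

lemma posPartOf_sub_negPartOf {A : Matrix m m ℂ} (hA : A.IsHermitian) :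
    posPartOf A - negPartOf A = A := by
  rw [posPartOf, dif_pos hA, negPartOf, dif_pos hA, conj_sub_conj]
  have hfun : (fun i => ((max (hA.eigenvalues i) 0 : ℝ) : ℂ) -
      ((max (-(hA.eigenvalues i)) 0 : ℝ) : ℂ)) = (RCLike.ofReal ∘ hA.eigenvalues) := by
    funext i
    rw [← Complex.ofReal_sub, max_zero_sub_max_neg_zero_eq_self]
    rfl
  have hst := hA.spectral_theorem
  rw [Unitary.conjStarAlgAut_apply] at hst
  rw [hfun, ← hst]

lemma mul_posProjOf {A : Matrix m m ℂ} (hA : A.IsHermitian) :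
    A * posProjOf A = posPartOf A := by
  rw [posProjOf, dif_pos hA, posPartOf, dif_pos hA]
  have step : A * ((hA.eigenvectorUnitary : Matrix m m ℂ) *
      Matrix.diagonal (fun i => if 0 < hA.eigenvalues i then (1 : ℂ) else 0) *
      (star (hA.eigenvectorUnitary : Matrix m m ℂ))) =
      ((hA.eigenvectorUnitary : Matrix m m ℂ) *
        Matrix.diagonal (RCLike.ofReal ∘ hA.eigenvalues) *
        (star (hA.eigenvectorUnitary : Matrix m m ℂ))) *
      ((hA.eigenvectorUnitary : Matrix m m ℂ) *
        Matrix.diagonal (fun i => if 0 < hA.eigenvalues i then (1 : ℂ) else 0) *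
        (star (hA.eigenvectorUnitary : Matrix m m ℂ))) := by
    have hst := hA.spectral_theorem
    rw [Unitary.conjStarAlgAut_apply] at hst
    rw [← hst]
  rw [step, conj_mul_conj]
  have hfun : (fun i => (RCLike.ofReal ∘ hA.eigenvalues) i *
      (if 0 < hA.eigenvalues i then (1:ℂ) else 0)) =
      fun i => ((max (hA.eigenvalues i) 0 : ℝ) : ℂ) := by
    funext i
    rcases lt_or_ge 0 (hA.eigenvalues i) with h | h
    · simp [if_pos h, max_eq_left h.le, Function.comp]
    · simp [if_neg (not_lt.mpr h), max_eq_right h, Function.comp]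
  rw [hfun]

lemma retrace_posPartOf {A : Matrix m m ℂ} (hA : A.IsHermitian) :
    (posPartOf A).trace.re = ∑ i, max (hA.eigenvalues i) 0 := by
  rw [posPartOf, dif_pos hA, uconj_trace, Complex.re_sum]
  simp

lemma retrace_of_isHermitian {A : Matrix m m ℂ} (hA : A.IsHermitian) :
    A.trace.re = ∑ i, hA.eigenvalues i := by
  conv_lhs => rw [hA.spectral_theorem]
  rw [Unitary.conjStarAlgAut_apply, uconj_trace, Complex.re_sum]
  simp

lemma psd_retrace_nonneg {A : Matrix m m ℂ} (hA : A.PosSemidef) : 0 ≤ A.trace.re := by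
  rw [retrace_of_isHermitian hA.1]
  exact Finset.sum_nonneg fun i _ => hA.eigenvalues_nonneg i

lemma trace_mul_re_nonneg {X Y : Matrix m m ℂ} (hX : X.PosSemidef) (hY : Y.PosSemidef) :
    0 ≤ ((X * Y).trace).re := by
  open scoped MatrixOrder in
  obtain ⟨B, rfl⟩ : ∃ B : Matrix m m ℂ, X = Bᴴ * B :=
    CStarAlgebra.nonneg_iff_eq_star_mul_self.mp hX.nonneg
  have h : (Bᴴ * B * Y).trace = (B * Y * Bᴴ).trace := (Matrix.trace_mul_cycle B Y Bᴴ).symm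
  rw [h]
  exact psd_retrace_nonneg (hY.mul_mul_conjTranspose_same B)

lemma tplus_nonneg {A : Matrix m m ℂ} (hA : A.IsHermitian) : 0 ≤ (posPartOf A).trace.re := by
  rw [retrace_posPartOf hA]
  exact Finset.sum_nonneg fun i _ => le_max_right _ _

/-- Key variational inequality: `Re Tr (Z T) ≤ Tr Z₊` for `0 ≤ T ≤ 1`. -/
lemma retrace_mul_le_tplus {Z T : Matrix m m ℂ} (hZ : Z.IsHermitian) (hT : T.PosSemidef)
    (hT1 : ((1 : Matrix m m ℂ) - T).PosSemidef) :
    ((Z * T).trace).re ≤ (posPartOf Z).trace.re := by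
  have hsplit : Z * T = posPartOf Z * T - negPartOf Z * T := by
    rw [← Matrix.sub_mul, posPartOf_sub_negPartOf hZ]
  have h1 : 0 ≤ ((negPartOf Z * T).trace).re := trace_mul_re_nonneg (negPartOf_posSemidef Z) hT
  have h2 : 0 ≤ ((posPartOf Z * (1 - T)).trace).re :=
    trace_mul_re_nonneg (posPartOf_posSemidef Z) hT1
  have h2' : (posPartOf Z * (1 - T)).trace = (posPartOf Z).trace - (posPartOf Z * T).trace := by
    rw [Matrix.mul_sub, Matrix.mul_one, Matrix.trace_sub]
  rw [h2', Complex.sub_re] at h2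
  rw [hsplit, Matrix.trace_sub, Complex.sub_re]
  linarith

lemma tplus_sub_le {X Y : Matrix m m ℂ} (hX : X.IsHermitian) (hY : Y.IsHermitian) :
    (posPartOf X).trace.re ≤ (posPartOf Y).trace.re + (posPartOf (X - Y)).trace.re := by
  have hsplit : X * posProjOf X = Y * posProjOf X + (X - Y) * posProjOf X := by
    rw [← Matrix.add_mul, add_sub_cancel]
  have h1 := retrace_mul_le_tplus hY (posProjOf_posSemidef X) (one_sub_posProjOf_posSemidef X)
  have h2 := retrace_mul_le_tplus (hX.sub hY) (posProjOf_posSemidef X)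
    (one_sub_posProjOf_posSemidef X)
  have h3 : (posPartOf X).trace.re = ((X * posProjOf X).trace).re := by
    rw [mul_posProjOf hX]
  rw [h3, hsplit, Matrix.trace_add, Complex.add_re]
  linarith

end MatrixAux
section MatrixAux2

variable {m : Type*} [Fintype m] [DecidableEq m]

lemma isHermitian_real_smul {σ : Matrix m m ℂ} (hσ : σ.IsHermitian) (c : ℝ) :
    (c • σ).IsHermitian := by
  have : (c • σ)ᴴ = star c • σᴴ := Matrix.conjTranspose_smul c σ
  rw [Matrix.IsHermitian, this, star_trivial, hσ.eq]

lemma tplus_neg_le {W : Matrix m m ℂ} (hW : W.IsHermitian) (htr : W.trace = 0) :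
    (posPartOf (-W)).trace.re ≤ (posPartOf W).trace.re := by
  have hP := posProjOf_posSemidef (-W)
  have hP1 := one_sub_posProjOf_posSemidef (-W)
  have h1 : (posPartOf (-W)).trace.re = (((-W) * posProjOf (-W)).trace).re := by
    rw [mul_posProjOf hW.neg]
  have h2 : (-W) * posProjOf (-W) = W * (1 - posProjOf (-W)) - W := by
    rw [Matrix.mul_sub, Matrix.mul_one, Matrix.neg_mul]
    abel
  have h3 : ((W * (1 - posProjOf (-W))).trace).re ≤ (posPartOf W).trace.re := by
    apply retrace_mul_le_tplus hW hP1
    rw [sub_sub_cancel]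
    exact hP
  rw [h1, h2, Matrix.trace_sub, Complex.sub_re, htr]
  simpa using h3

lemma tplus_neg_eq {W : Matrix m m ℂ} (hW : W.IsHermitian) (htr : W.trace = 0) :
    (posPartOf (-W)).trace.re = (posPartOf W).trace.re := by
  refine le_antisymm (tplus_neg_le hW htr) ?_
  have := tplus_neg_le hW.neg (by rw [Matrix.trace_neg, htr, neg_zero])
  rwa [neg_neg] at this

lemma tplus_eq_half_traceNorm {W : Matrix m m ℂ} (hW : W.IsHermitian) (htr : W.trace = 0) :
    (posPartOf W).trace.re = traceNormOf W / 2 := by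
  rw [retrace_posPartOf hW, traceNormOf, dif_pos hW]
  have hsum : ∑ i, hW.eigenvalues i = 0 := by
    have h := retrace_of_isHermitian hW
    rw [htr] at h
    simpa using h.symm
  have hmax : ∀ x : ℝ, max x 0 = (x + |x|) / 2 := by
    intro x
    rcases le_or_gt 0 x with h | h
    · rw [max_eq_left h, abs_of_nonneg h]; ring
    · rw [max_eq_right h.le, abs_of_neg h]; ring
  calc ∑ i, max (hW.eigenvalues i) 0 = ∑ i, (hW.eigenvalues i + |hW.eigenvalues i|) / 2 := by
        exact Finset.sum_congr rfl fun i _ => hmax _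
    _ = ((∑ i, hW.eigenvalues i) + ∑ i, |hW.eigenvalues i|) / 2 := by
        rw [← Finset.sum_div, Finset.sum_add_distrib]
    _ = (∑ i, |hW.eigenvalues i|) / 2 := by rw [hsum, zero_add]

lemma traceNormOf_neg_of_trace_zero {W : Matrix m m ℂ} (hW : W.IsHermitian) (htr : W.trace = 0) :
    traceNormOf (-W) = traceNormOf W := by
  have h1 := tplus_eq_half_traceNorm hW.neg (by rw [Matrix.trace_neg, htr, neg_zero])
  have h2 := tplus_eq_half_traceNorm hW htr
  have h3 := tplus_neg_eq hW htr
  rw [h1, h2] at h3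
  linarith

lemma tplus_of_density {ρ : Matrix m m ℂ} (hρ : ρ.PosSemidef) (htr : ρ.trace = 1) :
    (posPartOf ρ).trace.re = 1 := by
  rw [retrace_posPartOf hρ.1]
  have : ∀ i, max (hρ.1.eigenvalues i) 0 = hρ.1.eigenvalues i := fun i =>
    max_eq_left (hρ.eigenvalues_nonneg i)
  rw [Finset.sum_congr rfl fun i _ => this i, ← retrace_of_isHermitian hρ.1, htr]
  simp

lemma retrace_proj_nonneg {ρ : Matrix m m ℂ} (hρ : ρ.PosSemidef) (X : Matrix m m ℂ) :
    0 ≤ ((ρ * posProjOf X).trace).re :=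
  trace_mul_re_nonneg hρ (posProjOf_posSemidef X)

lemma retrace_proj_le_one {ρ : Matrix m m ℂ} (hρ : ρ.PosSemidef) (htr : ρ.trace = 1)
    (X : Matrix m m ℂ) : ((ρ * posProjOf X).trace).re ≤ 1 := by
  have := retrace_mul_le_tplus hρ.1 (posProjOf_posSemidef X) (one_sub_posProjOf_posSemidef X)
  rwa [tplus_of_density hρ htr] at this

/-- The master pointwise estimate. -/
lemma master_estimate (ρ ρ' σ : Matrix m m ℂ) (hρ : ρ.PosSemidef) (hρtr : ρ.trace = 1)
    (hρ' : ρ'.PosSemidef) (hρ'tr : ρ'.trace = 1) (hσ : σ.PosSemidef)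
    {c d : ℝ} (hc : 0 < c) (hd : 0 ≤ d) (hdc : d ≤ c) :
    ((ρ * posProjOf (ρ - c • σ)).trace).re ≤
      ((ρ' * posProjOf (ρ' - d • σ)).trace).re + d / c + traceNormOf (ρ - ρ') / 2 := by
  set A := ρ - c • σ with hA_def
  set B := ρ - d • σ with hB_def
  set A' := ρ' - d • σ with hA'_def
  have hAh : A.IsHermitian := hρ.1.sub (isHermitian_real_smul hσ.1 c)
  have hBh : B.IsHermitian := hρ.1.sub (isHermitian_real_smul hσ.1 d)
  have hA'h : A'.IsHermitian := hρ'.1.sub (isHermitian_real_smul hσ.1 d)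
  set P := posProjOf A with hP_def
  set P' := posProjOf A' with hP'_def
  have hPpsd := posProjOf_posSemidef A
  have hP1psd := one_sub_posProjOf_posSemidef A
  -- expand ρ * P = B * P + d • (σ * P)
  have expand : ∀ (e : ℝ), (ρ - e • σ) * P = ρ * P - e • (σ * P) := by
    intro e
    rw [Matrix.sub_mul, smul_mul_assoc]
  -- trace of σ * P is nonneg
  have hσP : 0 ≤ ((σ * P).trace).re := trace_mul_re_nonneg hσ hPpsd
  -- c * Re Tr(σ P) ≤ 1
  have hAPos : 0 ≤ ((A * P).trace).re := by
    rw [hP_def, mul_posProjOf hAh]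
    exact tplus_nonneg hAh
  have h_cσP : c * ((σ * P).trace).re ≤ 1 := by
    have h1 : ((A * P).trace).re = ((ρ * P).trace).re - c * ((σ * P).trace).re := by
      rw [hA_def, expand, Matrix.trace_sub, Complex.sub_re, Matrix.trace_smul, Complex.smul_re,
        smul_eq_mul]
    have h2 : ((ρ * P).trace).re ≤ 1 := retrace_proj_le_one hρ hρtr A
    linarith
  have h_dσP : d * ((σ * P).trace).re ≤ d / c := by
    have : d * ((σ * P).trace).re ≤ (d / c) * (c * ((σ * P).trace).re) := le_of_eq (by
      field_simp)
    calc d * ((σ * P).trace).re ≤ (d / c) * (c * ((σ * P).trace).re) := this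
      _ ≤ (d / c) * 1 := by
          apply mul_le_mul_of_nonneg_left h_cσP (div_nonneg hd hc.le)
      _ = d / c := mul_one _
  -- Re Tr(ρ P) ≤ Tr B₊ + d/c
  have step1 : ((ρ * P).trace).re ≤ (posPartOf B).trace.re + d / c := by
    have h1 : ((B * P).trace).re = ((ρ * P).trace).re - d * ((σ * P).trace).re := by
      rw [hB_def, expand, Matrix.trace_sub, Complex.sub_re, Matrix.trace_smul, Complex.smul_re,
        smul_eq_mul]
    have h2 : ((B * P).trace).re ≤ (posPartOf B).trace.re :=
      retrace_mul_le_tplus hBh hPpsd hP1psd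
    linarith
  -- Tr B₊ ≤ Tr A'₊ + traceNorm(ρ - ρ')/2
  have step2 : (posPartOf B).trace.re ≤ (posPartOf A').trace.re + traceNormOf (ρ - ρ') / 2 := by
    have hBA' : B - A' = ρ - ρ' := by rw [hB_def, hA'_def, sub_sub_sub_cancel_right]
    have h1 := tplus_sub_le hBh hA'h
    rw [hBA'] at h1
    have h2 : (posPartOf (ρ - ρ')).trace.re = traceNormOf (ρ - ρ') / 2 :=
      tplus_eq_half_traceNorm (hρ.1.sub hρ'.1) (by rw [Matrix.trace_sub, hρtr, hρ'tr, sub_self])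
    linarith
  -- Tr A'₊ ≤ Re Tr(ρ' P')
  have step3 : (posPartOf A').trace.re ≤ ((ρ' * P').trace).re := by
    have h1 : (posPartOf A').trace.re = ((A' * P').trace).re := by
      rw [hP'_def, mul_posProjOf hA'h]
    have h2 : ((A' * P').trace).re = ((ρ' * P').trace).re - d * ((σ * P').trace).re := by
      rw [hA'_def, Matrix.sub_mul, smul_mul_assoc, Matrix.trace_sub, Complex.sub_re,
        Matrix.trace_smul, Complex.smul_re, smul_eq_mul]
    have h3 : 0 ≤ d * ((σ * P').trace).re :=
      mul_nonneg hd (trace_mul_re_nonneg hσ (posProjOf_posSemidef A'))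
    linarith
  linarith

end MatrixAux2
section AnalysisAux

open Filter

lemma liminf_transfer {f g u : ℕ → ℝ} (hf0 : ∀ n, 0 ≤ f n) (hg1 : ∀ n, g n ≤ 1)
    (hu : Tendsto u atTop (nhds 0)) (hle : ∀ n, f n ≤ g n + u n) {c : ℝ}
    (hc : c ≤ liminf f atTop) : c ≤ liminf g atTop := by
  have hbd : IsBoundedUnder (· ≥ ·) atTop f := Filter.isBoundedUnder_of ⟨0, hf0⟩
  have hgb : IsBoundedUnder (· ≤ ·) atTop g := Filter.isBoundedUnder_of ⟨1, hg1⟩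
  have key : ∀ b, b < c → b ≤ liminf g atTop := by
    intro b hb
    set b' := (b + c) / 2 with hb'
    have hb'1 : b' < c := by rw [hb']; linarith
    have hb'2 : b < b' := by rw [hb']; linarith
    have h1 : ∀ᶠ n in atTop, b' < f n :=
      eventually_lt_of_lt_liminf (lt_of_lt_of_le hb'1 hc) hbd
    have h2 : ∀ᶠ n in atTop, u n < b' - b := hu.eventually (gt_mem_nhds (by linarith))
    have h3 : ∀ᶠ n in atTop, b ≤ g n := by
      filter_upwards [h1, h2] with n e1 e2
      have := hle n
      linarith
    exact le_liminf_of_le hgb.isCoboundedUnder_ge h3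
  by_contra h
  push_neg at h
  obtain ⟨b, hb1, hb2⟩ := exists_between h
  exact absurd (key b hb2) (not_le.mpr hb1)

lemma limsup_transfer {f g u : ℕ → ℝ} (hf1 : ∀ n, f n ≤ 1) (hg0 : ∀ n, 0 ≤ g n)
    (hu : Tendsto u atTop (nhds 0)) (hle : ∀ n, g n ≤ f n + u n) {c : ℝ}
    (hc : limsup f atTop ≤ c) : limsup g atTop ≤ c := by
  have hbd : IsBoundedUnder (· ≤ ·) atTop f := Filter.isBoundedUnder_of ⟨1, hf1⟩
  have hgb : IsBoundedUnder (· ≥ ·) atTop g := Filter.isBoundedUnder_of ⟨0, hg0⟩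
  have key : ∀ b, c < b → limsup g atTop ≤ b := by
    intro b hb
    set b' := (b + c) / 2 with hb'
    have hb'1 : c < b' := by rw [hb']; linarith
    have hb'2 : b' < b := by rw [hb']; linarith
    have h1 : ∀ᶠ n in atTop, f n < b' :=
      eventually_lt_of_limsup_lt (lt_of_le_of_lt hc hb'1) hbd
    have h2 : ∀ᶠ n in atTop, u n < b - b' := hu.eventually (gt_mem_nhds (by linarith))
    have h3 : ∀ᶠ n in atTop, g n ≤ b := by
      filter_upwards [h1, h2] with n e1 e2
      have := hle n
      linarith
    exact limsup_le_of_le hgb.isCoboundedUnder_le h3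
  by_contra h
  push_neg at h
  obtain ⟨b, hb1, hb2⟩ := exists_between h
  exact absurd (key b hb1) (not_le.mpr hb2)

lemma real_sSup_eq_of_transfer {S S' : Set ℝ} (h : ∀ a ∈ S, ∀ δ : ℝ, 0 < δ → a - δ ∈ S')
    (h' : ∀ a ∈ S', ∀ δ : ℝ, 0 < δ → a - δ ∈ S) : sSup S = sSup S' := by
  rcases S.eq_empty_or_nonempty with hS | hS
  · rcases S'.eq_empty_or_nonempty with hS' | hS'
    · rw [hS, hS']
    · obtain ⟨a, ha⟩ := hS'
      exact absurd (h' a ha 1 one_pos) (by rw [hS]; exact Set.notMem_empty _)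
  · obtain ⟨a₀, ha₀⟩ := id hS
    have hS' : S'.Nonempty := ⟨a₀ - 1, h a₀ ha₀ 1 one_pos⟩
    by_cases hb : BddAbove S'
    · have hbS : BddAbove S := by
        obtain ⟨M, hM⟩ := hb
        refine ⟨M + 1, fun a ha => ?_⟩
        have := hM (h a ha 1 one_pos)
        linarith
      apply le_antisymm
      · apply csSup_le hS
        intro a ha
        apply le_of_forall_pos_le_add
        intro δ hδ
        have := le_csSup hb (h a ha δ hδ)
        linarith
      · apply csSup_le hS'
        intro a ha
        apply le_of_forall_pos_le_add
        intro δ hδ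
        have := le_csSup hbS (h' a ha δ hδ)
        linarith
    · have hbS : ¬BddAbove S := by
        intro ⟨M, hM⟩
        apply hb
        refine ⟨M, fun a ha => ?_⟩
        have h1 := hM (h' a ha 1 one_pos)
        have h2 := hM (h' a ha 2 two_pos)
        -- a - 1 ≤ M and a - 2 ≤ M; we need a ≤ M. Use arbitrary δ:
        have h3 : ∀ δ : ℝ, 0 < δ → a - δ ≤ M := fun δ hδ => hM (h' a ha δ hδ)
        by_contra hc
        push_neg at hc
        have := h3 ((a - M) / 2) (by linarith)
        linarith
      rw [Real.sSup_of_not_bddAbove hbS, Real.sSup_of_not_bddAbove hb]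

lemma real_sInf_eq_of_transfer {S S' : Set ℝ} (h : ∀ a ∈ S, ∀ δ : ℝ, 0 < δ → a + δ ∈ S')
    (h' : ∀ a ∈ S', ∀ δ : ℝ, 0 < δ → a + δ ∈ S) : sInf S = sInf S' := by
  rcases S.eq_empty_or_nonempty with hS | hS
  · rcases S'.eq_empty_or_nonempty with hS' | hS'
    · rw [hS, hS']
    · obtain ⟨a, ha⟩ := hS'
      exact absurd (h' a ha 1 one_pos) (by rw [hS]; exact Set.notMem_empty _)
  · obtain ⟨a₀, ha₀⟩ := id hS
    have hS' : S'.Nonempty := ⟨a₀ + 1, h a₀ ha₀ 1 one_pos⟩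
    by_cases hb : BddBelow S'
    · have hbS : BddBelow S := by
        obtain ⟨M, hM⟩ := hb
        refine ⟨M - 1, fun a ha => ?_⟩
        have := hM (h a ha 1 one_pos)
        linarith
      apply le_antisymm
      · apply le_csInf hS'
        intro a ha
        apply le_of_forall_pos_le_add
        intro δ hδ
        have := csInf_le hbS (h' a ha δ hδ)
        linarith
      · apply le_csInf hS
        intro a ha
        apply le_of_forall_pos_le_add
        intro δ hδ
        have := csInf_le hb (h a ha δ hδ)
        linarith
    · have hbS : ¬BddBelow S := by
        intro ⟨M, hM⟩
        apply hb
        refine ⟨M, fun a ha => ?_⟩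
        have h3 : ∀ δ : ℝ, 0 < δ → M ≤ a + δ := fun δ hδ => hM (h' a ha δ hδ)
        by_contra hc
        push_neg at hc
        have := h3 ((M - a) / 2) (by linarith)
        linarith
      rw [Real.sInf_of_not_bddBelow hbS, Real.sInf_of_not_bddBelow hb]

lemma exp_ratio_tendsto {δ : ℝ} (hδ : 0 < δ) (a : ℝ) :
    Filter.Tendsto (fun n : ℕ => Real.exp ((n : ℝ) * (a - δ)) / Real.exp ((n : ℝ) * a))
      Filter.atTop (nhds 0) := by
  have heq : (fun n : ℕ => Real.exp ((n : ℝ) * (a - δ)) / Real.exp ((n : ℝ) * a)) =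
      fun n : ℕ => Real.exp (-(δ * (n : ℝ))) := by
    funext n
    rw [← Real.exp_sub]
    ring_nf
  rw [heq]
  apply Real.tendsto_exp_atBot.comp
  apply Filter.tendsto_neg_atBot_iff.mpr
  exact Filter.Tendsto.const_mul_atTop hδ tendsto_natCast_atTop_atTop

end AnalysisAux
/-- The spectral divergence rate `D̲(ε|ρ̂‖σ̂)`. -/
noncomputable def Dlow {ι : ℕ → Type*} [∀ n, Fintype (ι n)] [∀ n, DecidableEq (ι n)]
    (ε : ℝ) (ρ σ : ∀ n, Matrix (ι n) (ι n) ℂ) : ℝ :=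
  sSup {a : ℝ | 1 - ε ≤
    Filter.liminf (fun n : ℕ =>
      ((ρ n * posProjOf (ρ n - Real.exp (n * a) • σ n)).trace).re) Filter.atTop}

/-- The spectral divergence rate `D̄(ε|ρ̂‖σ̂)`. -/
noncomputable def Dhigh {ι : ℕ → Type*} [∀ n, Fintype (ι n)] [∀ n, DecidableEq (ι n)]
    (ε : ℝ) (ρ σ : ∀ n, Matrix (ι n) (ι n) ℂ) : ℝ :=
  sInf {a : ℝ |
    Filter.limsup (fun n : ℕ =>
      ((ρ n * posProjOf (ρ n - Real.exp (n * a) • σ n)).trace).re) Filter.atTop ≤ ε}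
section MainAux

open Filter

variable {ι : ℕ → Type*} [∀ n, Fintype (ι n)] [∀ n, DecidableEq (ι n)]

lemma Slow_transfer (ρ ρ' σ : ∀ n, Matrix (ι n) (ι n) ℂ)
    (hρ : ∀ n, (ρ n).PosSemidef) (hρtr : ∀ n, (ρ n).trace = 1)
    (hρ' : ∀ n, (ρ' n).PosSemidef) (hρ'tr : ∀ n, (ρ' n).trace = 1)
    (hσ : ∀ n, (σ n).PosSemidef)
    (hclose : Filter.Tendsto (fun n => traceNormOf (ρ n - ρ' n)) Filter.atTop (nhds 0))
    (ε : ℝ) (a : ℝ)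
    (ha : 1 - ε ≤ liminf (fun n : ℕ =>
      ((ρ n * posProjOf (ρ n - Real.exp (n * a) • σ n)).trace).re) atTop)
    (δ : ℝ) (hδ : 0 < δ) :
    1 - ε ≤ liminf (fun n : ℕ =>
      ((ρ' n * posProjOf (ρ' n - Real.exp (n * (a - δ)) • σ n)).trace).re) atTop := by
  apply liminf_transfer
    (u := fun n : ℕ => Real.exp ((n : ℝ) * (a - δ)) / Real.exp ((n : ℝ) * a) +
      traceNormOf (ρ n - ρ' n) / 2)
    (fun n => retrace_proj_nonneg (hρ n) _)
    (fun n => retrace_proj_le_one (hρ' n) (hρ'tr n) _)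
    (by simpa using (exp_ratio_tendsto hδ a).add (hclose.div_const 2))
    ?_ ha
  intro n
  have hdc : Real.exp ((n : ℝ) * (a - δ)) ≤ Real.exp ((n : ℝ) * a) := by
    apply Real.exp_le_exp.mpr
    apply mul_le_mul_of_nonneg_left (by linarith) (Nat.cast_nonneg n)
  have := master_estimate (ρ n) (ρ' n) (σ n) (hρ n) (hρtr n) (hρ' n) (hρ'tr n) (hσ n)
    (Real.exp_pos ((n : ℝ) * a)) (Real.exp_pos ((n : ℝ) * (a - δ))).le hdc
  linarith

lemma Thigh_transfer (ρ ρ' σ : ∀ n, Matrix (ι n) (ι n) ℂ)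
    (hρ : ∀ n, (ρ n).PosSemidef) (hρtr : ∀ n, (ρ n).trace = 1)
    (hρ' : ∀ n, (ρ' n).PosSemidef) (hρ'tr : ∀ n, (ρ' n).trace = 1)
    (hσ : ∀ n, (σ n).PosSemidef)
    (hclose : Filter.Tendsto (fun n => traceNormOf (ρ' n - ρ n)) Filter.atTop (nhds 0))
    (ε : ℝ) (a : ℝ)
    (ha : limsup (fun n : ℕ =>
      ((ρ n * posProjOf (ρ n - Real.exp (n * a) • σ n)).trace).re) atTop ≤ ε)
    (δ : ℝ) (hδ : 0 < δ) :
    limsup (fun n : ℕ =>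
      ((ρ' n * posProjOf (ρ' n - Real.exp (n * (a + δ)) • σ n)).trace).re) atTop ≤ ε := by
  have hexp : Filter.Tendsto (fun n : ℕ => Real.exp ((n : ℝ) * a) /
      Real.exp ((n : ℝ) * (a + δ))) atTop (nhds 0) := by
    have := exp_ratio_tendsto hδ (a + δ)
    simpa using this
  apply limsup_transfer
    (u := fun n : ℕ => Real.exp ((n : ℝ) * a) / Real.exp ((n : ℝ) * (a + δ)) +
      traceNormOf (ρ' n - ρ n) / 2)
    (fun n => retrace_proj_le_one (hρ n) (hρtr n) _)
    (fun n => retrace_proj_nonneg (hρ' n) _)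
    (by simpa using hexp.add (hclose.div_const 2))
    ?_ ha
  intro n
  have hdc : Real.exp ((n : ℝ) * a) ≤ Real.exp ((n : ℝ) * (a + δ)) := by
    apply Real.exp_le_exp.mpr
    apply mul_le_mul_of_nonneg_left (by linarith) (Nat.cast_nonneg n)
  have := master_estimate (ρ' n) (ρ n) (σ n) (hρ' n) (hρ'tr n) (hρ n) (hρtr n) (hσ n)
    (Real.exp_pos ((n : ℝ) * (a + δ))) (Real.exp_pos ((n : ℝ) * a)).le hdc
  linarith

end MainAux

/-- Continuity of the spectral divergence rates: asymptotically trace-norm-equal sequences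
of density operators have the same spectral divergence rates. -/
theorem spectralDivergence_continuity {ι : ℕ → Type*}
    [∀ n, Fintype (ι n)] [∀ n, DecidableEq (ι n)]
    (ρ ρ' σ : ∀ n, Matrix (ι n) (ι n) ℂ)
    (hρ : ∀ n, (ρ n).PosSemidef) (hρtr : ∀ n, (ρ n).trace = 1)
    (hρ' : ∀ n, (ρ' n).PosSemidef) (hρ'tr : ∀ n, (ρ' n).trace = 1)
    (hσ : ∀ n, (σ n).PosSemidef)
    (hclose : Filter.Tendsto (fun n => traceNormOf (ρ n - ρ' n)) Filter.atTop (nhds 0))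
    (ε : ℝ) (hε : ε ∈ Set.Icc (0 : ℝ) 1) :
    Dlow ε ρ σ = Dlow ε ρ' σ ∧ Dhigh ε ρ σ = Dhigh ε ρ' σ := by
  have hclose' : Filter.Tendsto (fun n => traceNormOf (ρ' n - ρ n)) Filter.atTop (nhds 0) := by
    apply hclose.congr
    intro n
    have hh : (ρ n).IsHermitian := (hρ n).1
    have hh' : (ρ' n).IsHermitian := (hρ' n).1
    have htr0 : (ρ n - ρ' n).trace = 0 := by
      rw [Matrix.trace_sub, hρtr n, hρ'tr n, sub_self]
    calc traceNormOf (ρ n - ρ' n) = traceNormOf (-(ρ n - ρ' n)) :=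
          (traceNormOf_neg_of_trace_zero (hh.sub hh') htr0).symm
      _ = traceNormOf (ρ' n - ρ n) := by rw [neg_sub]
  constructor
  · apply real_sSup_eq_of_transfer
    · intro a ha δ hδ
      exact Slow_transfer ρ ρ' σ hρ hρtr hρ' hρ'tr hσ hclose ε a ha δ hδ
    · intro a ha δ hδ
      exact Slow_transfer ρ' ρ σ hρ' hρ'tr hρ hρtr hσ hclose' ε a ha δ hδ
  · apply real_sInf_eq_of_transfer
    · intro a ha δ hδ
      exact Thigh_transfer ρ ρ' σ hρ hρtr hρ' hρ'tr hσ hclose' ε a ha δ hδ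
    · intro a ha δ hδ
      exact Thigh_transfer ρ' ρ σ hρ' hρ'tr hρ hρtr hσ hclose ε a ha δ hδ
end
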